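/- arXiv:2007.13728 — 4 statements merged into one kernel-verified Lean document; each statement's English description precedes it below -/
import Mathlib

section
/- For every α ≥ 1, n ≥ 1, q ∈ [0,1), and every m ∈ [n], one has μ_α(n,q) ≤ n(1-q)^α + α·m·(1-q)^α·q^m·(1-q^n)/(1-q^m)^{α+1} + (m(1-q)/(1-q^m))^α · Σ_{1 < k ≤ m} 1/k^α. -/
/-!
Split the sum at `m`. For `k ≤ m`, `1 - q ^ k` is a concave function of `k` vanishing at `0`, so
`(1 - q ^ k) / k` decreases and `(1 - q) / (1 - q ^ k) ≤ (m (1 - q) / (1 - q ^ m)) / k`. For `k > m`,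
Bernoulli's inequality `(1 - x) ^ α ≥ 1 - α x` gives `(1 - q ^ k) ^ (-α) ≤ 1 + α q ^ k / (1 - q ^ m) ^ α`,
and the geometric tail `∑_{m < k ≤ n} q ^ k` is absorbed using `1 - q ^ m ≤ m (1 - q)`.
-/

open Finset

section

variable {q : ℝ}

lemma nat_mul_pow_mul_one_sub_le (hq0 : 0 ≤ q) (hq1 : q ≤ 1) (k : ℕ) :
    k * q ^ k * (1 - q) ≤ 1 - q ^ k := by
  rw [← geom_sum_mul_neg]
  refine mul_le_mul_of_nonneg_right ?_ (by linarith)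
  simpa using card_nsmul_le_sum (range k) (q ^ ·) (q ^ k)
    fun i hi ↦ pow_le_pow_of_le_one hq0 hq1 (mem_range.mp hi).le

lemma nat_mul_one_sub_pow_le_of_le (hq0 : 0 ≤ q) (hq1 : q ≤ 1) {k m : ℕ} (hkm : k ≤ m) :
    k * (1 - q ^ m) ≤ m * (1 - q ^ k) := by
  induction m, hkm using Nat.le_induction with
  | base => rfl
  | succ m hkm ih =>
    have hqm : k * (1 - q) * q ^ m ≤ k * (1 - q) * q ^ k :=
      mul_le_mul_of_nonneg_left (pow_le_pow_of_le_one hq0 hq1 hkm) (by positivity)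
    have := nat_mul_pow_mul_one_sub_le hq0 hq1 k
    push_cast
    rw [pow_succ]
    nlinarith

lemma one_sub_pow_le_nat_mul_one_sub (hq0 : 0 ≤ q) (hq1 : q ≤ 1) {m : ℕ} (hm : 1 ≤ m) :
    1 - q ^ m ≤ m * (1 - q) := by
  simpa using nat_mul_one_sub_pow_le_of_le hq0 hq1 hm

lemma sum_Ioc_pow_mul_one_sub_pow_le (hq0 : 0 ≤ q) (hq1 : q ≤ 1) {m n : ℕ} (hm : 1 ≤ m)
    (hmn : m ≤ n) : (∑ k ∈ Ioc m n, q ^ k) * (1 - q ^ m) ≤ m * q ^ m * (1 - q ^ n) := by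
  have hgeom : (∑ k ∈ Ioc m n, q ^ k) * (1 - q) = q ^ (m + 1) * (1 - q ^ (n - m)) := by
    rw [← Ico_add_one_add_one_eq_Ioc, geom_sum_Ico_mul_neg _ (by omega),
      show n + 1 = m + 1 + (n - m) by omega, pow_add]
    ring
  have htail : q ^ (m + 1) * (1 - q ^ (n - m)) ≤ q ^ m * (1 - q ^ n) :=
    mul_le_mul (pow_le_pow_of_le_one hq0 hq1 m.le_succ)
      (by linarith [pow_le_pow_of_le_one hq0 hq1 (n.sub_le m)])
      (by linarith [pow_le_one₀ hq0 hq1 (n := n - m)]) (by positivity)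
  calc (∑ k ∈ Ioc m n, q ^ k) * (1 - q ^ m)
      ≤ (∑ k ∈ Ioc m n, q ^ k) * (m * (1 - q)) :=
        mul_le_mul_of_nonneg_left (one_sub_pow_le_nat_mul_one_sub hq0 hq1 hm)
          (sum_nonneg fun k _ ↦ pow_nonneg hq0 k)
    _ = m * (q ^ (m + 1) * (1 - q ^ (n - m))) := by rw [← hgeom]; ring
    _ ≤ m * q ^ m * (1 - q ^ n) := by rw [mul_assoc]; gcongr

lemma inv_one_sub_rpow_le {α x y : ℝ} (hα : 1 ≤ α) (hy0 : 0 ≤ y) (hyx : y ≤ x) (hx1 : x < 1) :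
    ((1 - y) ^ α)⁻¹ ≤ 1 + α * y / (1 - x) ^ α := by
  have hx : 0 < (1 - x) ^ α := Real.rpow_pos_of_pos (by linarith) α
  have hy : 0 < (1 - y) ^ α := Real.rpow_pos_of_pos (by linarith) α
  have hxy : (1 - x) ^ α ≤ (1 - y) ^ α := Real.rpow_le_rpow (by linarith) (by linarith) (by linarith)
  have hbernoulli : 1 ≤ (1 - y) ^ α + α * y := by
    have := one_add_mul_self_le_rpow_one_add (s := -y) (by linarith) hα
    rw [← sub_eq_add_neg] at this
    linarith
  calc ((1 - y) ^ α)⁻¹ ≤ ((1 - y) ^ α + α * y) / (1 - y) ^ α := by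
        rw [inv_eq_one_div]; gcongr
    _ = 1 + α * y / (1 - y) ^ α := by rw [add_div, div_self hy.ne']
    _ ≤ 1 + α * y / (1 - x) ^ α := by gcongr

lemma div_one_sub_pow_rpow_le {α : ℝ} (hα : 1 ≤ α) (hq0 : 0 ≤ q) (hq1 : q < 1) {k m : ℕ}
    (hm : 1 ≤ m) (hmk : m ≤ k) :
    ((1 - q) / (1 - q ^ k)) ^ α ≤ (1 - q) ^ α + α * (1 - q) ^ α * q ^ k / (1 - q ^ m) ^ α := by
  have hqk : q ^ k ≤ q ^ m := pow_le_pow_of_le_one hq0 hq1.le hmk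
  have hqm : q ^ m < 1 := pow_lt_one₀ hq0 hq1 (by omega)
  have h1q : 0 ≤ (1 - q) ^ α := Real.rpow_nonneg (by linarith) α
  calc ((1 - q) / (1 - q ^ k)) ^ α = (1 - q) ^ α * ((1 - q ^ k) ^ α)⁻¹ := by
        rw [Real.div_rpow (by linarith) (by linarith), div_eq_mul_inv]
    _ ≤ (1 - q) ^ α * (1 + α * q ^ k / (1 - q ^ m) ^ α) :=
        mul_le_mul_of_nonneg_left (inv_one_sub_rpow_le hα (pow_nonneg hq0 k) hqk hqm) h1q
    _ = (1 - q) ^ α + α * (1 - q) ^ α * q ^ k / (1 - q ^ m) ^ α := by ring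

lemma div_one_sub_pow_le (hq0 : 0 ≤ q) (hq1 : q < 1) {k m : ℕ} (hk : 1 ≤ k) (hkm : k ≤ m) :
    (1 - q) / (1 - q ^ k) ≤ m * (1 - q) / (1 - q ^ m) * (1 / k) := by
  have hqk : 0 < 1 - q ^ k := by linarith [pow_lt_one₀ hq0 hq1 (by omega : k ≠ 0)]
  have hqm : 0 < 1 - q ^ m := by linarith [pow_lt_one₀ hq0 hq1 (by omega : m ≠ 0)]
  have hk0 : (0 : ℝ) < k := by exact_mod_cast hk
  rw [div_mul_div_comm, mul_one, div_le_div_iff₀ hqk (by positivity)]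
  have := mul_le_mul_of_nonneg_left (nat_mul_one_sub_pow_le_of_le hq0 hq1.le hkm)
    (sub_nonneg.mpr hq1.le)
  linarith

lemma sum_Icc_two_div_one_sub_pow_rpow_le {α : ℝ} (hα : 0 ≤ α) (hq0 : 0 ≤ q) (hq1 : q < 1)
    (m : ℕ) :
    ∑ k ∈ Icc 2 m, ((1 - q) / (1 - q ^ k)) ^ α
      ≤ (m * (1 - q) / (1 - q ^ m)) ^ α * ∑ k ∈ Icc 2 m, (1 / (k : ℝ)) ^ α := by
  rw [mul_sum]
  refine sum_le_sum fun k hk ↦ ?_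
  obtain ⟨hk, hkm⟩ := mem_Icc.mp hk
  have hqk : 0 ≤ 1 - q ^ k := by linarith [pow_le_one₀ hq0 hq1.le (n := k)]
  have hqm : 0 ≤ 1 - q ^ m := by linarith [pow_le_one₀ hq0 hq1.le (n := m)]
  rw [← Real.mul_rpow (div_nonneg (by nlinarith) hqm) (by positivity)]
  exact Real.rpow_le_rpow (div_nonneg (by linarith) hqk)
    (div_one_sub_pow_le hq0 hq1 (by omega) hkm) hα

lemma sum_Ioc_div_one_sub_pow_rpow_le {α : ℝ} (hα : 1 ≤ α) (hq0 : 0 ≤ q) (hq1 : q < 1)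
    {m n : ℕ} (hm : 1 ≤ m) (hmn : m ≤ n) :
    ∑ k ∈ Ioc m n, ((1 - q) / (1 - q ^ k)) ^ α
      ≤ n * (1 - q) ^ α + α * m * (1 - q) ^ α * q ^ m * (1 - q ^ n) / (1 - q ^ m) ^ (α + 1) := by
  have hqm : 0 < 1 - q ^ m := by linarith [pow_lt_one₀ hq0 hq1 (by omega : m ≠ 0)]
  have h1q : 0 ≤ (1 - q) ^ α := Real.rpow_nonneg (by linarith) α
  have hC : 0 ≤ α * (1 - q) ^ α / (1 - q ^ m) ^ (α + 1) := by positivity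
  calc ∑ k ∈ Ioc m n, ((1 - q) / (1 - q ^ k)) ^ α
      ≤ ∑ k ∈ Ioc m n, ((1 - q) ^ α + α * (1 - q) ^ α * q ^ k / (1 - q ^ m) ^ α) :=
        sum_le_sum fun k hk ↦ div_one_sub_pow_rpow_le hα hq0 hq1 hm (mem_Ioc.mp hk).1.le
    _ = (n - m : ℕ) * (1 - q) ^ α
          + α * (1 - q) ^ α / (1 - q ^ m) ^ (α + 1) * ((∑ k ∈ Ioc m n, q ^ k) * (1 - q ^ m)) := by
        rw [sum_add_distrib, sum_const, Nat.card_Ioc, nsmul_eq_mul, ← sum_div, ← mul_sum,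
          Real.rpow_add_one hqm.ne']
        field_simp
    _ ≤ n * (1 - q) ^ α + α * (1 - q) ^ α / (1 - q ^ m) ^ (α + 1) * (m * q ^ m * (1 - q ^ n)) := by
        refine add_le_add (mul_le_mul_of_nonneg_right ?_ h1q) (mul_le_mul_of_nonneg_left ?_ hC)
        · exact_mod_cast n.sub_le m
        · exact sum_Ioc_pow_mul_one_sub_pow_le hq0 hq1.le hm hmn
    _ = n * (1 - q) ^ α + α * m * (1 - q) ^ α * q ^ m * (1 - q ^ n) / (1 - q ^ m) ^ (α + 1) := by
        ring

end

theorem mu_alpha_upper_bound_general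
    (α : ℝ) (hα : 1 ≤ α) (n : ℕ) (q : ℝ)
    (hq : q ∈ Set.Ico (0 : ℝ) 1) (m : ℕ) (hm : m ∈ Finset.Icc 1 n) :
    ∑ k ∈ Finset.Icc 2 n, ((1 - q) / (1 - q ^ k)) ^ α
      ≤ (n : ℝ) * (1 - q) ^ α
        + α * m * (1 - q) ^ α * q ^ m * (1 - q ^ n) / (1 - q ^ m) ^ (α + 1)
        + ((m : ℝ) * (1 - q) / (1 - q ^ m)) ^ α
            * ∑ k ∈ Finset.Icc 2 m, (1 / (k : ℝ)) ^ α := by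
  obtain ⟨hq0, hq1⟩ := hq
  obtain ⟨hm1, hmn⟩ := mem_Icc.mp hm
  have hIcc (j : ℕ) : Icc 2 j = Ioc 1 j := Icc_add_one_left_eq_Ioc 1 j
  rw [hIcc n, ← sum_Ioc_consecutive _ hm1 hmn, ← hIcc m, add_comm (∑ k ∈ Icc 2 m, _)]
  exact add_le_add (sum_Ioc_div_one_sub_pow_rpow_le hα hq0 hq1 hm1 hmn)
    (sum_Icc_two_div_one_sub_pow_rpow_le (by linarith) hq0 hq1 m)

/-- Upper bound on `μ_α(n,q) = Σ_{1<k≤n} ((1-q)/(1-qᵏ))^α`: for any `m ∈ [n]`,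
`μ_α(n,q) ≤ n(1-q)^α + α m (1-q)^α qᵐ (1-qⁿ)/(1-qᵐ)^{α+1}
  + (m(1-q)/(1-qᵐ))^α Σ_{1<k≤m} 1/k^α`. -/
theorem mu_alpha_upper_bound
    (α : ℝ) (hα : 1 ≤ α) (n : ℕ) (hn : 1 ≤ n) (q : ℝ)
    (hq : q ∈ Set.Ico (0 : ℝ) 1) (m : ℕ) (hm : m ∈ Finset.Icc 1 n) :
    ∑ k ∈ Finset.Icc 2 n, ((1 - q) / (1 - q ^ k)) ^ α
      ≤ (n : ℝ) * (1 - q) ^ α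
        + α * m * (1 - q) ^ α * q ^ m * (1 - q ^ n) / (1 - q ^ m) ^ (α + 1)
        + ((m : ℝ) * (1 - q) / (1 - q ^ m)) ^ α
            * ∑ k ∈ Finset.Icc 2 m, (1 / (k : ℝ)) ^ α :=
  mu_alpha_upper_bound_general α hα n q hq m hm
end

section
/- For every integer m ≥ 1, the function φ(x) = (1-x)·x^m/(1-x^m) is increasing on [0,1) and satisfies φ(x) ≤ 1/m for all x ∈ [0,1). -/
/-! Cancelling `1 - x` turns `φ(x)` into `xᵐ / (1 + x + ⋯ + xᵐ⁻¹)`. After cross-multiplying,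
monotonicity is the termwise inequality `xᵐ yⁱ ≤ yᵐ xⁱ` for `0 ≤ x ≤ y` and `i ≤ m`, strict at
`i = 0`, and the bound is `m xᵐ ≤ ∑ xⁱ`, which holds termwise because `x ≤ 1`. -/

open Finset

theorem one_sub_mul_pow_div_one_sub_pow {K : Type*} [Field K] {x : K} (hx : x ≠ 1) (m : ℕ) :
    (1 - x) * x ^ m / (1 - x ^ m) = x ^ m / ∑ i ∈ range m, x ^ i := by
  rw [← mul_neg_geom_sum, mul_div_mul_left _ _ (sub_ne_zero.2 hx.symm)]

section GeomSumRatio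

variable {K : Type*} [Field K] [LinearOrder K] [IsStrictOrderedRing K]

theorem pow_mul_pow_le_pow_mul_pow {x y : K} (hx : 0 ≤ x) (hxy : x ≤ y) {i m : ℕ}
    (hi : i ≤ m) : x ^ m * y ^ i ≤ y ^ m * x ^ i := by
  obtain ⟨k, rfl⟩ := Nat.exists_eq_add_of_le hi
  have hy : 0 ≤ y := hx.trans hxy
  calc x ^ (i + k) * y ^ i = x ^ k * (x ^ i * y ^ i) := by ring
    _ ≤ y ^ k * (x ^ i * y ^ i) := by gcongr
    _ = y ^ (i + k) * x ^ i := by ring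

theorem strictMonoOn_pow_div_geom_sum {m : ℕ} (hm : m ≠ 0) :
    StrictMonoOn (fun x : K => x ^ m / ∑ i ∈ range m, x ^ i) (Set.Ici 0) := by
  intro x (hx : 0 ≤ x) y (hy : 0 ≤ y) hxy
  rw [div_lt_div_iff₀ (geom_sum_pos hx hm) (geom_sum_pos hy hm), mul_sum, mul_sum]
  refine sum_lt_sum (fun i hi => pow_mul_pow_le_pow_mul_pow hx hxy.le (mem_range.1 hi).le)
    ⟨0, mem_range.2 (Nat.pos_of_ne_zero hm), ?_⟩
  simpa using pow_lt_pow_left₀ hxy hx hm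

theorem pow_div_geom_sum_le_one_div {x : K} (hx₀ : 0 ≤ x) (hx₁ : x ≤ 1) {m : ℕ} (hm : m ≠ 0) :
    x ^ m / ∑ i ∈ range m, x ^ i ≤ 1 / m := by
  rw [div_le_div_iff₀ (geom_sum_pos hx₀ hm) (by positivity), one_mul, mul_comm]
  simpa using card_nsmul_le_sum (range m) (x ^ ·) (x ^ m)
    fun i hi => pow_le_pow_of_le_one hx₀ hx₁ (mem_range.1 hi).le

end GeomSumRatio

/-- For an integer `m ≥ 1`, `φ(x) = (1-x)xᵐ/(1-xᵐ)` is increasing on `[0,1)`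
and bounded above by `1/m` there. -/
theorem phi_m_strictMonoOn_and_le
    (m : ℕ) (hm : 1 ≤ m) :
    StrictMonoOn (fun x : ℝ => (1 - x) * x ^ m / (1 - x ^ m)) (Set.Ico 0 1) ∧
    ∀ x ∈ Set.Ico (0 : ℝ) 1, (1 - x) * x ^ m / (1 - x ^ m) ≤ 1 / m := by
  have hm₀ : m ≠ 0 := Nat.one_le_iff_ne_zero.1 hm
  have hφ : Set.EqOn (fun x : ℝ => x ^ m / ∑ i ∈ range m, x ^ i)
      (fun x => (1 - x) * x ^ m / (1 - x ^ m)) (Set.Ico 0 1) := fun x hx =>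
    (one_sub_mul_pow_div_one_sub_pow hx.2.ne m).symm
  refine ⟨((strictMonoOn_pow_div_geom_sum hm₀).mono Set.Ico_subset_Ici_self).congr hφ,
    fun x hx => (hφ hx).symm.trans_le (pow_div_geom_sum_le_one_div hx.1 hx.2.le hm₀)⟩
end

section
/- Let q ∈ [0,1), n ≥ 1, s ≥ 0 be given, and let N(n,s) be the random variable with P(N(n,s) = ℓ) = q^{(s-n)ℓ + ℓ(ℓ+1)/2} · (∏_{i=s+1-n+ℓ}^{s} (1-q^i)) · Σ_{A ⊆ [n], |A| = ℓ} q^{Σ_{a∈A}(a-1)}. This family satisfies the recursion P(N(n,s) = ℓ) = (1-q^s)·P(N(n-1,s-1) = ℓ) + q^s·P(N(n-1,s) = ℓ-1) for all n, s ≥ 1, with P(N(0,s)=ℓ) = 1 if ℓ=0 and 0 otherwise. -/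
/-!
Write `p(n,s,ℓ) = w(n,s,ℓ) · S(n,ℓ)`, where `S(n,ℓ) = Σ_{A ⊆ [n], |A| = ℓ} q^{Σ_{a∈A}(a-1)}`.
Splitting the subsets of `[m+1]` according to whether they contain `m+1` gives the Pascal rule
`S(m+1,ℓ+1) = S(m,ℓ+1) + q^m S(m,ℓ)`. The weight `w(m+1,t+1,ℓ)` is `(1 - q^{t+1}) w(m,t,ℓ)`,
its product gaining the top factor, while `q^m w(m+1,t+1,ℓ+1) = q^{t+1} w(m,t+1,ℓ)`, the two
products being the same and the exponents agreeing. The two terms of the Pascal rule thus give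
the two terms of the recursion.
-/

open Finset

/-- The explicit probability mass function of the threshold process:
`p(n,s,ℓ) = q^{(s-n)ℓ + ℓ(ℓ+1)/2} · Π_{i=s+1-n+ℓ}^{s} (1-qⁱ)
  · Σ_{A ⊆ [n], |A| = ℓ} q^{Σ_{a∈A}(a-1)}`. -/
noncomputable def thresholdPMF (q : ℝ) (n s ℓ : ℕ) : ℝ :=
  q ^ (((s : ℤ) - n) * ℓ + (ℓ * (ℓ + 1) / 2 : ℕ)) *
    (∏ i ∈ Finset.Icc ((s : ℤ) + 1 - n + ℓ) (s : ℤ), (1 - q ^ i)) *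
    ∑ A ∈ Finset.powersetCard ℓ (Finset.Icc 1 n), q ^ (∑ a ∈ A, (a - 1))

lemma pow_mul_zpow_eq_pow_mul_zpow {G₀ : Type*} [GroupWithZero G₀] (x : G₀) {a c : ℕ} {b d : ℤ}
    (ha : a ≠ 0) (hcd : c ≠ 0 ∨ d ≠ 0) (h : a + b = c + d) : x ^ a * x ^ b = x ^ c * x ^ d := by
  rcases eq_or_ne x 0 with rfl | hx
  · rw [zero_pow ha, zero_mul]
    rcases hcd with hc | hd
    · rw [zero_pow hc, zero_mul]
    · rw [zero_zpow d hd, mul_zero]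
  · rw [← zpow_natCast, ← zpow_natCast x c, ← zpow_add₀ hx, ← zpow_add₀ hx, h]

lemma Nat.triangle_add_one (k : ℕ) : (k + 1) * (k + 1 + 1) / 2 = k * (k + 1) / 2 + (k + 1) := by
  rw [show (k + 1) * (k + 1 + 1) = k * (k + 1) + (k + 1) * 2 by ring,
    Nat.add_mul_div_right _ _ two_pos]

section SubsetPowSum

variable {R : Type*} [CommSemiring R] (q : R)

def subsetPowSum (n ℓ : ℕ) : R :=
  ∑ A ∈ powersetCard ℓ (Icc 1 n), q ^ ∑ a ∈ A, (a - 1)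

@[simp]
lemma subsetPowSum_zero_right (n : ℕ) : subsetPowSum q n 0 = 1 := by
  simp [subsetPowSum]

lemma subsetPowSum_of_lt {n ℓ : ℕ} (h : n < ℓ) : subsetPowSum q n ℓ = 0 := by
  rw [subsetPowSum, powersetCard_eq_empty.mpr (by simpa using h), sum_empty]

lemma subsetPowSum_succ_succ (m ℓ : ℕ) :
    subsetPowSum q (m + 1) (ℓ + 1) = subsetPowSum q m (ℓ + 1) + q ^ m * subsetPowSum q m ℓ := by
  have hm : m + 1 ∉ Icc 1 m := by simp
  rw [subsetPowSum, ← insert_Icc_right_eq_Icc_add_one (by omega), powersetCard_succ_insert hm,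
    sum_union, sum_image, subsetPowSum, subsetPowSum, mul_sum]
  · congr 1
    refine sum_congr rfl fun A hA => ?_
    have hA : m + 1 ∉ A := fun h => hm ((mem_powersetCard.mp hA).1 h)
    rw [sum_insert hA, Nat.add_sub_cancel, pow_add]
  · intro A hA B hB hAB
    rw [← erase_insert (notMem_mono (mem_powersetCard.mp hA).1 hm), hAB,
      erase_insert (notMem_mono (mem_powersetCard.mp hB).1 hm)]
  · refine disjoint_left.mpr fun A hA hA' => ?_
    obtain ⟨B, -, rfl⟩ := mem_image.mp hA'
    exact hm ((mem_powersetCard.mp hA).1 (mem_insert_self _ B))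

end SubsetPowSum

section ThresholdWeight

variable (q : ℝ)

noncomputable def thresholdWeight (n s ℓ : ℕ) : ℝ :=
  q ^ (((s : ℤ) - n) * ℓ + (ℓ * (ℓ + 1) / 2 : ℕ)) *
    ∏ i ∈ Icc ((s : ℤ) + 1 - n + ℓ) (s : ℤ), (1 - q ^ i)

lemma thresholdPMF_eq_thresholdWeight_mul (n s ℓ : ℕ) :
    thresholdPMF q n s ℓ = thresholdWeight q n s ℓ * subsetPowSum q n ℓ :=
  rfl

lemma thresholdWeight_succ_succ {m ℓ : ℕ} (t : ℕ) (h : ℓ ≤ m) :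
    thresholdWeight q (m + 1) (t + 1) ℓ = (1 - q ^ (t + 1)) * thresholdWeight q m t ℓ := by
  have hIcc : Icc ((↑(t + 1) : ℤ) + 1 - ↑(m + 1) + ℓ) ↑(t + 1) =
      insert ((t : ℤ) + 1) (Icc ((t : ℤ) + 1 - m + ℓ) t) := by
    rw [insert_Icc_right_eq_Icc_add_one (by omega)]
    push_cast
    ring_nf
  rw [thresholdWeight, thresholdWeight, hIcc, prod_insert (by simp),
    show ((t : ℤ) + 1) = ↑(t + 1) by push_cast; ring, zpow_natCast]
  push_cast
  ring_nf

lemma pow_mul_thresholdWeight (m t k : ℕ) :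
    q ^ (t + 1) * thresholdWeight q m (t + 1) k
      = q ^ m * thresholdWeight q (m + 1) (t + 1) (k + 1) := by
  have hprod : Icc ((↑(t + 1) : ℤ) + 1 - m + k) ↑(t + 1) =
      Icc ((↑(t + 1) : ℤ) + 1 - ↑(m + 1) + ↑(k + 1)) ↑(t + 1) := by
    push_cast
    ring_nf
  rw [thresholdWeight, thresholdWeight, hprod, ← mul_assoc, ← mul_assoc,
    pow_mul_zpow_eq_pow_mul_zpow q (Nat.succ_ne_zero t)]
  · rcases Nat.eq_zero_or_pos m with rfl | hm
    · right
      rw [Nat.triangle_add_one]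
      push_cast
      rw [add_sub_cancel_right]
      positivity
    · exact Or.inl hm.ne'
  · rw [Nat.triangle_add_one]
    push_cast
    ring

lemma thresholdWeight_succ_succ_mul_subsetPowSum (m t ℓ : ℕ) :
    thresholdWeight q (m + 1) (t + 1) ℓ * subsetPowSum q m ℓ
      = (1 - q ^ (t + 1)) * thresholdPMF q m t ℓ := by
  rw [thresholdPMF_eq_thresholdWeight_mul]
  rcases le_or_gt ℓ m with h | h
  · rw [thresholdWeight_succ_succ q t h, mul_assoc]
  · -- the product in the weight is then empty instead of gaining a factor, but `S(m,ℓ) = 0`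
    simp only [subsetPowSum_of_lt q h, mul_zero]

end ThresholdWeight

lemma thresholdPMF_zero_left (q : ℝ) (s ℓ : ℕ) :
    thresholdPMF q 0 s ℓ = if ℓ = 0 then 1 else 0 := by
  rcases ℓ with _ | ℓ
  · simp [thresholdPMF_eq_thresholdWeight_mul, thresholdWeight]
  · simp [thresholdPMF_eq_thresholdWeight_mul, subsetPowSum_of_lt q ℓ.succ_pos]

theorem thresholdPMF_recursion_general (q : ℝ) :
    (∀ s ℓ : ℕ, thresholdPMF q 0 s ℓ = if ℓ = 0 then 1 else 0) ∧
    ∀ n s : ℕ, 1 ≤ n → 1 ≤ s → ∀ ℓ : ℕ,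
      thresholdPMF q n s ℓ
        = (1 - q ^ s) * thresholdPMF q (n - 1) (s - 1) ℓ
          + q ^ s * (if ℓ = 0 then 0 else thresholdPMF q (n - 1) s (ℓ - 1)) := by
  refine ⟨thresholdPMF_zero_left q, fun n s hn hs ℓ => ?_⟩
  obtain ⟨m, rfl⟩ := Nat.exists_eq_add_of_le' hn
  obtain ⟨t, rfl⟩ := Nat.exists_eq_add_of_le' hs
  rw [Nat.add_sub_cancel, Nat.add_sub_cancel, thresholdPMF_eq_thresholdWeight_mul q (m + 1)]
  rcases ℓ with _ | k
  · simpa using thresholdWeight_succ_succ_mul_subsetPowSum q m t 0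
  · rw [subsetPowSum_succ_succ, mul_add, thresholdWeight_succ_succ_mul_subsetPowSum,
      if_neg k.succ_ne_zero, Nat.add_sub_cancel, thresholdPMF_eq_thresholdWeight_mul q m (t + 1),
      ← mul_assoc (q ^ (t + 1)), pow_mul_thresholdWeight]
    ring

/-- The explicit formula satisfies the threshold-process recursion
`p(n,s,ℓ) = (1-qˢ) p(n-1,s-1,ℓ) + qˢ p(n-1,s,ℓ-1)` for `n, s ≥ 1`
(with the second term vanishing when `ℓ = 0`), together with the base case
`p(0,s,ℓ) = 1_{ℓ=0}`. -/
theorem thresholdPMF_recursion (q : ℝ) (hq : q ∈ Set.Ico (0 : ℝ) 1) :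
    (∀ s ℓ : ℕ, thresholdPMF q 0 s ℓ = if ℓ = 0 then 1 else 0) ∧
    ∀ n s : ℕ, 1 ≤ n → 1 ≤ s → ∀ ℓ : ℕ,
      thresholdPMF q n s ℓ
        = (1 - q ^ s) * thresholdPMF q (n - 1) (s - 1) ℓ
          + q ^ s * (if ℓ = 0 then 0 else thresholdPMF q (n - 1) s (ℓ - 1)) :=
  thresholdPMF_recursion_general q
end

section
/- Let (q_n) be a sequence in [0,1) with q_n → 0 and n·q_n → λ ∈ [0,∞). For each n let R_n be a sum of n-1 independent Bernoulli random variables where the k-th (for 2 ≤ k ≤ n) has success probability (1-q_n)/(1-q_n^k). Then n-1-R_n converges in distribution to a Poisson(λ) random variable. -/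
/-!
The number `n - 1 - R_n` of failures is a Poisson-binomial count whose failure probabilities
`p k = 1 - (1 - q)/(1 - q^k)` lie in `[q - q², q]`; hence `max p → 0` and `∑ p → λ`.
Factoring out `∏ (1 - p k)`, the probability of exactly `j` failures is
`∏ (1 - p k) * e_j (w)` with odds `w k = p k / (1 - p k)`. The product tends to `e^{-λ}` since
`-w ≤ log (1 - p) ≤ -p`, and `e_j (w) → λ^j / j!` by induction on `j`, from the sandwich
`(∑ w - j δ) e_j ≤ (j + 1) e_{j+1} ≤ (∑ w) e_j` for weights in `[0, δ]`.
-/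

open Finset MeasureTheory Filter

namespace Multiset

theorem esymm_cons_succ {R : Type*} [CommSemiring R] (a : R) (s : Multiset R) (j : ℕ) :
    (a ::ₘ s).esymm (j + 1) = s.esymm (j + 1) + a * s.esymm j := by
  simp only [esymm, powersetCard_cons, map_add, sum_add, map_map, Function.comp_def, prod_cons,
    sum_map_mul_left]

@[simp]
theorem esymm_zero {R : Type*} [CommSemiring R] (s : Multiset R) : s.esymm 0 = 1 := by
  simp [esymm]

theorem esymm_nonneg {R : Type*} [CommSemiring R] [PartialOrder R] [IsOrderedRing R]
    {s : Multiset R} (hs : ∀ x ∈ s, 0 ≤ x) (j : ℕ) : 0 ≤ s.esymm j :=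
  sum_nonneg fun _ hy => by
    obtain ⟨t, ht, rfl⟩ := mem_map.1 hy
    exact prod_nonneg fun x hx => hs x (mem_of_le (mem_powersetCard.1 ht).1 hx)

variable {R : Type*} [CommRing R] [LinearOrder R] [IsStrictOrderedRing R]

theorem succ_mul_esymm_succ_le_sum_mul_esymm {s : Multiset R} (hs : ∀ x ∈ s, 0 ≤ x)
    (j : ℕ) :
    (j + 1) * s.esymm (j + 1) ≤ s.sum * s.esymm j := by
  induction s using Multiset.induction_on generalizing j with
  | empty => simp [esymm, powersetCard_zero_right]
  | cons a s ih =>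
    have ha : 0 ≤ a := hs a (mem_cons_self a s)
    have hs' : ∀ x ∈ s, 0 ≤ x := fun x hx => hs x (mem_cons_of_mem hx)
    rw [esymm_cons_succ, sum_cons]
    cases j with
    | zero =>
      have h0 := ih hs' 0
      simp only [esymm_zero, Nat.cast_zero, zero_add, one_mul, mul_one] at h0 ⊢
      linarith
    | succ j =>
      rw [esymm_cons_succ]
      have h1 := ih hs' (j + 1)
      have h2 := mul_le_mul_of_nonneg_left (ih hs' j) ha
      have h3 := mul_nonneg (mul_nonneg ha ha) (esymm_nonneg hs' j)
      push_cast at h1 h2 ⊢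
      linarith

theorem sum_sub_mul_mul_esymm_le_succ_mul_esymm_succ {s : Multiset R} {δ : R}
    (hs : ∀ x ∈ s, 0 ≤ x ∧ x ≤ δ) (j : ℕ) :
    (s.sum - j * δ) * s.esymm j ≤ (j + 1) * s.esymm (j + 1) := by
  induction s using Multiset.induction_on generalizing j with
  | empty => cases j <;> simp [esymm, powersetCard_zero_right]
  | cons a s ih =>
    obtain ⟨ha, haδ⟩ := hs a (mem_cons_self a s)
    have hs' : ∀ x ∈ s, 0 ≤ x ∧ x ≤ δ := fun x hx => hs x (mem_cons_of_mem hx)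
    rw [esymm_cons_succ, sum_cons]
    cases j with
    | zero =>
      have h0 := ih hs' 0
      simp only [esymm_zero, Nat.cast_zero, zero_mul, sub_zero, zero_add, one_mul, mul_one]
        at h0 ⊢
      linarith
    | succ j =>
      rw [esymm_cons_succ]
      have h1 := ih hs' (j + 1)
      have h2 := mul_le_mul_of_nonneg_left (ih hs' j) ha
      have h3 := mul_nonneg (mul_nonneg ha (sub_nonneg.2 haδ))
        (esymm_nonneg (fun x hx => (hs' x hx).1) j)
      push_cast at h1 h2 ⊢
      linarith

end Multiset

open Nat Real Topology

theorem tendsto_esymm_of_tendsto_sum {α : Type*} {l : Filter α} {s : α → Multiset ℝ}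
    {δ : α → ℝ} {lam : ℝ} (hs : ∀ᶠ a in l, ∀ x ∈ s a, 0 ≤ x ∧ x ≤ δ a)
    (hδ : Tendsto δ l (𝓝 0)) (hsum : Tendsto (fun a => (s a).sum) l (𝓝 lam)) (j : ℕ) :
    Tendsto (fun a => (s a).esymm j) l (𝓝 (lam ^ j / j !)) := by
  induction j with
  | zero => simpa using tendsto_const_nhds
  | succ j ih =>
    have hlower : Tendsto (fun a => ((s a).sum - j * δ a) * (s a).esymm j) l
        (𝓝 (lam * (lam ^ j / j !))) := by
      simpa using (hsum.sub ((hδ.const_mul (j : ℝ)))).mul ih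
    have hsucc : Tendsto (fun a => (j + 1) * (s a).esymm (j + 1)) l
        (𝓝 (lam * (lam ^ j / j !))) :=
      tendsto_of_tendsto_of_tendsto_of_le_of_le' hlower (hsum.mul ih)
        (hs.mono fun a ha => (s a).sum_sub_mul_mul_esymm_le_succ_mul_esymm_succ ha j)
        (hs.mono fun a ha =>
          (s a).succ_mul_esymm_succ_le_sum_mul_esymm (fun x hx => (ha x hx).1) j)
    convert hsucc.const_mul ((j : ℝ) + 1)⁻¹ using 1
    · ext a
      field_simp
    · rw [factorial_succ, pow_succ]
      push_cast
      field_simp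

def poissonBinomial {ι : Type*} [DecidableEq ι] (I : Finset ι) (p : ι → ℝ) (j : ℕ) :
    ℝ :=
  ∑ S ∈ I.powersetCard j, (∏ k ∈ S, p k) * ∏ k ∈ I \ S, (1 - p k)

theorem poissonBinomial_eq_prod_mul_esymm {ι : Type*} [DecidableEq ι] {I : Finset ι}
    {p : ι → ℝ} (hp : ∀ k ∈ I, p k < 1) (j : ℕ) :
    poissonBinomial I p j =
      (∏ k ∈ I, (1 - p k)) * (I.val.map fun k => p k / (1 - p k)).esymm j := by
  rw [Finset.esymm_map_val, mul_sum]
  refine sum_congr rfl fun S hS => ?_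
  have hSI : S ⊆ I := (mem_powersetCard.1 hS).1
  have hne : ∏ k ∈ S, (1 - p k) ≠ 0 :=
    prod_ne_zero_iff.2 fun k hk => (sub_pos.2 (hp k (hSI hk))).ne'
  rw [← prod_sdiff hSI, prod_div_distrib]
  field_simp

section PoissonLimit

variable {α ι : Type*} {l : Filter α} {I : α → Finset ι} {p : α → ι → ℝ} {δ : α → ℝ}
  {lam : ℝ}

theorem tendsto_one_sub (hδ : Tendsto δ l (𝓝 0)) :
    Tendsto (fun a => 1 - δ a) l (𝓝 1) := by
  simpa using tendsto_const_nhds.sub hδ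

theorem tendsto_sum_div_one_sub (hp : ∀ᶠ a in l, ∀ k ∈ I a, 0 ≤ p a k ∧ p a k ≤ δ a)
    (hδ : Tendsto δ l (𝓝 0)) (hsum : Tendsto (fun a => ∑ k ∈ I a, p a k) l (𝓝 lam)) :
    Tendsto (fun a => ∑ k ∈ I a, p a k / (1 - p a k)) l (𝓝 lam) := by
  have hupper : Tendsto (fun a => (∑ k ∈ I a, p a k) / (1 - δ a)) l (𝓝 lam) := by
    rw [← div_one lam]
    exact hsum.div (tendsto_one_sub hδ) one_ne_zero
  refine tendsto_of_tendsto_of_tendsto_of_le_of_le' hsum hupper ?_ ?_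
  · filter_upwards [hp, hδ.eventually_lt_const one_pos] with a ha hδ1
    refine sum_le_sum fun k hk => ?_
    obtain ⟨h0, hδk⟩ := ha k hk
    exact le_div_self h0 (by linarith) (by linarith)
  · filter_upwards [hp, hδ.eventually_lt_const one_pos] with a ha hδ1
    rw [sum_div]
    refine sum_le_sum fun k hk => ?_
    obtain ⟨h0, hδk⟩ := ha k hk
    exact div_le_div_of_nonneg_left h0 (by linarith) (by linarith)

theorem tendsto_prod_one_sub (hp : ∀ᶠ a in l, ∀ k ∈ I a, 0 ≤ p a k ∧ p a k ≤ δ a)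
    (hδ : Tendsto δ l (𝓝 0)) (hsum : Tendsto (fun a => ∑ k ∈ I a, p a k) l (𝓝 lam)) :
    Tendsto (fun a => ∏ k ∈ I a, (1 - p a k)) l (𝓝 (exp (-lam))) := by
  have hlog : Tendsto (fun a => ∑ k ∈ I a, log (1 - p a k)) l (𝓝 (-lam)) := by
    refine tendsto_of_tendsto_of_tendsto_of_le_of_le' (tendsto_sum_div_one_sub hp hδ hsum).neg
      hsum.neg ?_ ?_
    · filter_upwards [hp, hδ.eventually_lt_const one_pos] with a ha hδ1
      rw [← sum_neg_distrib]
      refine sum_le_sum fun k hk => ?_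
      have hpos : 0 < 1 - p a k := by linarith [(ha k hk).2]
      have := one_sub_inv_le_log_of_pos hpos
      field_simp at this ⊢
      linarith
    · filter_upwards [hp, hδ.eventually_lt_const one_pos] with a ha hδ1
      rw [← sum_neg_distrib]
      refine sum_le_sum fun k hk => ?_
      have hpos : 0 < 1 - p a k := by linarith [(ha k hk).2]
      linarith [log_le_sub_one_of_pos hpos]
  refine ((continuous_exp.tendsto _).comp hlog).congr' ?_
  filter_upwards [hp, hδ.eventually_lt_const one_pos] with a ha hδ1
  rw [Function.comp_apply, exp_sum]
  exact prod_congr rfl fun k hk => exp_log (by linarith [(ha k hk).2])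

theorem tendsto_poissonBinomial [DecidableEq ι]
    (hp : ∀ᶠ a in l, ∀ k ∈ I a, 0 ≤ p a k ∧ p a k ≤ δ a)
    (hδ : Tendsto δ l (𝓝 0)) (hsum : Tendsto (fun a => ∑ k ∈ I a, p a k) l (𝓝 lam))
    (j : ℕ) :
    Tendsto (fun a => poissonBinomial (I a) (p a) j) l (𝓝 (exp (-lam) * lam ^ j / j !)) := by
  have hodds : Tendsto (fun a => ((I a).val.map fun k => p a k / (1 - p a k)).esymm j) l
      (𝓝 (lam ^ j / j !)) := by
    refine tendsto_esymm_of_tendsto_sum (δ := fun a => δ a / (1 - δ a)) ?_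
      (by rw [← zero_div 1]; exact hδ.div (tendsto_one_sub hδ) one_ne_zero)
      (by simpa [sum_map_val] using tendsto_sum_div_one_sub hp hδ hsum) j
    filter_upwards [hp, hδ.eventually_lt_const one_pos] with a ha hδ1
    intro x hx
    obtain ⟨k, hk, rfl⟩ := Multiset.mem_map.1 hx
    obtain ⟨h0, hδk⟩ := ha k (by simpa using hk)
    exact ⟨div_nonneg h0 (by linarith),
      div_le_div₀ (by linarith) hδk (by linarith) (by linarith)⟩
  rw [mul_div_assoc]
  refine ((tendsto_prod_one_sub hp hδ hsum).mul hodds).congr' ?_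
  filter_upwards [hp, hδ.eventually_lt_const one_pos] with a ha hδ1
  exact (poissonBinomial_eq_prod_mul_esymm (fun k hk => by linarith [(ha k hk).2]) j).symm

end PoissonLimit

open ProbabilityTheory in
theorem measureReal_card_filter_mem_eq_poissonBinomial {Ω ι β : Type*} [MeasurableSpace Ω]
    [MeasurableSpace β] [DecidableEq ι] {μ : Measure Ω} [IsProbabilityMeasure μ]
    {Y : ι → Ω → β} (hY : ∀ k, Measurable (Y k)) (hind : iIndepFun Y μ) {B : Set β}
    [DecidablePred (· ∈ B)] (hB : MeasurableSet B) (I : Finset ι) (j : ℕ) :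
    μ.real {ω | #{k ∈ I | Y k ω ∈ B} = j} =
      poissonBinomial I (fun k => μ.real (Y k ⁻¹' B)) j := by
  set T : Ω → Finset ι := fun ω => {k ∈ I | Y k ω ∈ B}
  have hevent : {ω | #(T ω) = j} = ⋃ S ∈ I.powersetCard j, {ω | T ω = S} := by
    ext ω
    simp [T, mem_powersetCard, filter_subset]
  have hatom :
      ∀ S ⊆ I, {ω | T ω = S} = ⋂ k ∈ I, Y k ⁻¹' (if k ∈ S then B else Bᶜ) := by
    intro S hS
    ext ω
    simp only [T, Set.mem_ofPred_eq, Set.mem_iInter, Set.mem_preimage, Finset.ext_iff,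
      mem_filter]
    refine ⟨fun h k hk => ?_, fun h k => ?_⟩
    · split_ifs with hkS
      · exact ((h k).2 hkS).2
      · exact fun hkB => hkS ((h k).1 ⟨hk, hkB⟩)
    · by_cases hk : k ∈ I
      · have := h k hk
        split_ifs at this with hkS <;> simp_all
      · exact iff_of_false (fun h' => hk h'.1) (fun h' => hk (hS h'))
  have hmeas : ∀ S ⊆ I, MeasurableSet {ω | T ω = S} := fun S hS => by
    rw [hatom S hS]
    exact .biInter I.countable_toSet fun k _ => hY k (by split_ifs <;> simp [hB])
  rw [hevent, measureReal_biUnion_finset]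
  · refine sum_congr rfl fun S hS => ?_
    have hSI := (mem_powersetCard.1 hS).1
    rw [hatom S hSI, measureReal_def,
      hind.measure_inter_preimage_eq_mul _ fun k _ => by split_ifs <;> simp [hB],
      ENNReal.toReal_prod, ← prod_sdiff hSI, mul_comm]
    congr 1 <;> refine prod_congr rfl fun k hk => ?_
    · simp [hk, measureReal_def]
    · rw [Finset.mem_sdiff] at hk
      simp [hk.2, ← measureReal_def, Set.preimage_compl, probReal_compl_eq_one_sub (hY k hB)]
  · exact fun S _ S' _ hne => Set.disjoint_left.2 fun ω h h' => hne (h.symm.trans h')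
  · exact fun S hS => hmeas S (mem_powersetCard.1 hS).1

theorem card_sub_sum_eq_card_filter_eq_zero {ι : Type*} (I : Finset ι) (f : ι → ℕ)
    (hf : ∀ k ∈ I, f k ≤ 1) : #I - ∑ k ∈ I, f k = #{k ∈ I | f k = 0} := by
  rw [card_eq_sum_ones, ← sum_tsub_distrib _ hf, card_filter]
  refine sum_congr rfl fun k hk => ?_
  have := hf k hk
  split_ifs <;> omega

theorem one_sub_div_one_sub_pow_mem_Icc {q : ℝ} (hq : q ∈ Set.Ico 0 1) {k : ℕ}
    (hk : 2 ≤ k) :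
    1 - (1 - q) / (1 - q ^ k) ∈ Set.Icc (q - q ^ 2) q := by
  obtain ⟨hq0, hq1⟩ := hq
  have hqk : q ^ k ≤ q ^ 2 := pow_le_pow_of_le_one hq0 hq1.le hk
  have hq2 : q ^ 2 ≤ q := pow_le_of_le_one hq0 hq1.le two_ne_zero
  have hpos : 0 < 1 - q ^ k := by linarith
  have heq : 1 - (1 - q) / (1 - q ^ k) = (q - q ^ k) / (1 - q ^ k) := by
    field_simp
    ring
  rw [heq, Set.mem_Icc, le_div_iff₀ hpos, div_le_iff₀ hpos]
  constructor
  · nlinarith [pow_nonneg hq0 k]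
  · nlinarith [mul_le_of_le_one_left (pow_nonneg hq0 k) hq1.le]

theorem tendsto_sum_Icc_two_of_mem_Icc {q : ℕ → ℝ} {lam : ℝ} {f : ℕ → ℕ → ℝ}
    (hq0 : Tendsto q atTop (𝓝 0))
    (hnq : Tendsto (fun n : ℕ => (n : ℝ) * q n) atTop (𝓝 lam))
    (hf : ∀ n, ∀ k ∈ Icc 2 n, f n k ∈ Set.Icc (q n - q n ^ 2) (q n)) :
    Tendsto (fun n => ∑ k ∈ Icc 2 n, f n k) atTop (𝓝 lam) := by
  have hcard : ∀ n : ℕ, 1 ≤ n → (#(Icc 2 n) : ℝ) = n - 1 := fun n hn => by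
    rw [Nat.card_Icc, Nat.cast_sub (by omega)]
    push_cast
    ring
  have hupper : Tendsto (fun n : ℕ => (n : ℝ) * q n - q n) atTop (𝓝 lam) := by
    simpa using hnq.sub hq0
  have hlower : Tendsto (fun n : ℕ => ((n : ℝ) * q n - q n) * (1 - q n)) atTop (𝓝 lam) := by
    simpa using hupper.mul (tendsto_one_sub hq0)
  refine tendsto_of_tendsto_of_tendsto_of_le_of_le' hlower hupper ?_ ?_
  · filter_upwards [eventually_ge_atTop 1] with n hn
    calc ((n : ℝ) * q n - q n) * (1 - q n) = #(Icc 2 n) * (q n - q n ^ 2) := by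
          rw [hcard n hn]; ring
      _ ≤ ∑ k ∈ Icc 2 n, f n k := by
          rw [← nsmul_eq_mul, ← sum_const]; exact sum_le_sum fun k hk => (hf n k hk).1
  · filter_upwards [eventually_ge_atTop 1] with n hn
    calc ∑ k ∈ Icc 2 n, f n k ≤ #(Icc 2 n) * q n := by
          rw [← nsmul_eq_mul, ← sum_const]; exact sum_le_sum fun k hk => (hf n k hk).2
      _ = (n : ℝ) * q n - q n := by rw [hcard n hn]; ring

theorem measureReal_preimage_zero_eq_one_sub {Ω : Type*} [MeasurableSpace Ω] {μ : Measure Ω}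
    [IsProbabilityMeasure μ] {Y : Ω → ℕ} (hY : Measurable Y) (hY1 : ∀ ω, Y ω ≤ 1) :
    μ.real (Y ⁻¹' {0}) = 1 - μ.real {ω | Y ω = 1} := by
  have hcompl : Y ⁻¹' {0} = {ω | Y ω = 1}ᶜ := by
    ext ω
    have := hY1 ω
    simp only [Set.mem_preimage, Set.mem_singleton_iff, Set.mem_compl_iff, Set.mem_ofPred_eq]
    omega
  exact hcompl ▸ probReal_compl_eq_one_sub (hY (measurableSet_singleton 1))

theorem poisson_limit_right_depth_general
    (q : ℕ → ℝ) (hq01 : ∀ n, q n ∈ Set.Ico (0 : ℝ) 1)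
    (hq0 : Tendsto q atTop (nhds 0))
    (lam : ℝ)
    (hnq : Tendsto (fun n : ℕ => (n : ℝ) * q n) atTop (nhds lam))
    {Ω : Type*} [MeasurableSpace Ω] (ℙ : Measure Ω) [IsProbabilityMeasure ℙ]
    (X : ℕ → ℕ → Ω → ℕ)
    (hmeas : ∀ n k, Measurable (X n k))
    (hval : ∀ n k ω, X n k ω ≤ 1)
    (hindep : ∀ n, ProbabilityTheory.iIndepFun
      (fun k => X n k) ℙ)
    (hbern : ∀ n, ∀ k ∈ Finset.Icc 2 n,
      ℙ {ω | X n k ω = 1} = ENNReal.ofReal ((1 - q n) / (1 - q n ^ k))) :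
    ∀ j : ℕ,
      Tendsto
        (fun n => (ℙ {ω | (n - 1) - ∑ k ∈ Finset.Icc 2 n, X n k ω = j}).toReal)
        atTop
        (nhds (Real.exp (-lam) * lam ^ j / (Nat.factorial j : ℝ))) := by
  intro j
  have hbounds :
      ∀ n, ∀ k ∈ Icc 2 n, ℙ.real (X n k ⁻¹' {0}) ∈ Set.Icc (q n - q n ^ 2) (q n) := by
    intro n k hk
    obtain ⟨hq, hq1⟩ := hq01 n
    have hr : 0 ≤ (1 - q n) / (1 - q n ^ k) :=
      div_nonneg (by linarith) (sub_nonneg.2 (pow_le_one₀ hq hq1.le))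
    rw [measureReal_preimage_zero_eq_one_sub (hmeas n k) (hval n k), measureReal_def,
      hbern n k hk, ENNReal.toReal_ofReal hr]
    exact one_sub_div_one_sub_pow_mem_Icc (hq01 n) (mem_Icc.1 hk).1
  have hlaw : ∀ n, (ℙ {ω | (n - 1) - ∑ k ∈ Icc 2 n, X n k ω = j}).toReal
      = poissonBinomial (Icc 2 n) (fun k => ℙ.real (X n k ⁻¹' {0})) j := by
    intro n
    rw [← measureReal_card_filter_mem_eq_poissonBinomial (hmeas n) (hindep n)
      (measurableSet_singleton 0), measureReal_def]
    congr with ω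
    have hcard : n - 1 = #(Icc 2 n) := by rw [Nat.card_Icc]; omega
    rw [hcard, card_sub_sum_eq_card_filter_eq_zero _ _ fun k _ => hval n k ω]
    simp
  simp_rw [hlaw]
  exact tendsto_poissonBinomial
    (.of_forall fun n k hk => ⟨measureReal_nonneg, (hbounds n k hk).2⟩) hq0
    (tendsto_sum_Icc_two_of_mem_Icc hq0 hnq hbounds) j

/-- Poisson limit: if `q_n → 0`, `n q_n → λ`, and `R_n = Σ_{k=2}^n X_{n,k}` is a
sum of independent Bernoulli variables with `P(X_{n,k}=1) = (1-q_n)/(1-q_nᵏ)`,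
then `n-1-R_n` converges in distribution to `Poisson(λ)`, i.e. its point
probabilities converge to `e^{-λ} λʲ/j!`. -/
theorem poisson_limit_right_depth
    (q : ℕ → ℝ) (hq01 : ∀ n, q n ∈ Set.Ico (0 : ℝ) 1)
    (hq0 : Tendsto q atTop (nhds 0))
    (lam : ℝ) (hlam : 0 ≤ lam)
    (hnq : Tendsto (fun n : ℕ => (n : ℝ) * q n) atTop (nhds lam))
    {Ω : Type*} [MeasurableSpace Ω] (ℙ : Measure Ω) [IsProbabilityMeasure ℙ]
    (X : ℕ → ℕ → Ω → ℕ)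
    (hmeas : ∀ n k, Measurable (X n k))
    (hval : ∀ n k ω, X n k ω ≤ 1)
    (hindep : ∀ n, ProbabilityTheory.iIndepFun
      (fun k => X n k) ℙ)
    (hbern : ∀ n, ∀ k ∈ Finset.Icc 2 n,
      ℙ {ω | X n k ω = 1} = ENNReal.ofReal ((1 - q n) / (1 - q n ^ k))) :
    ∀ j : ℕ,
      Tendsto
        (fun n => (ℙ {ω | (n - 1) - ∑ k ∈ Finset.Icc 2 n, X n k ω = j}).toReal)
        atTop
        (nhds (Real.exp (-lam) * lam ^ j / (Nat.factorial j : ℝ))) :=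
  poisson_limit_right_depth_general q hq01 hq0 lam hnq ℙ X hmeas hval hindep hbern
end
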